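/- The relation ⪰ is a partial order on the set of positive systems for Σ: it is reflexive and transitive, and it is antisymmetric, i.e. if P ⪰ Q and Q ⪰ P then Σ(P) = Σ(Q). -/
import Mathlib


/-- `P` is a positive system for the root set `S`: there is `X ∈ V` on which no root of `S`
vanishes, such that `P` is the set of roots of `S` that are positive on `X`. -/
def IsPosSystem {V : Type*} [AddCommGroup V] [Module ℝ V]
    (S P : Set (V →ₗ[ℝ] ℝ)) : Prop :=
  ∃ X : V, (∀ α ∈ S, α X ≠ 0) ∧ P = {α | α ∈ S ∧ 0 < α X}

/-- `Σ(P, σ) = Σ(P) ∩ σ·Σ(P)`, where `σ` acts on functionals by `λ ↦ λ ∘ σ`. -/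
def rootsSigma {V : Type*} [AddCommGroup V] [Module ℝ V]
    (σ : V →ₗ[ℝ] V) (P : Set (V →ₗ[ℝ] ℝ)) : Set (V →ₗ[ℝ] ℝ) :=
  P ∩ ((fun α => α.comp σ) '' P)

/-- `Σ(P, σθ) = Σ(P) ∩ σθ·Σ(P)`, where `σθ` acts on functionals by `λ ↦ -(λ ∘ σ)`. -/
def rootsSigmaTheta {V : Type*} [AddCommGroup V] [Module ℝ V]
    (σ : V →ₗ[ℝ] V) (P : Set (V →ₗ[ℝ] ℝ)) : Set (V →ₗ[ℝ] ℝ) :=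
  P ∩ ((fun α => -(α.comp σ)) '' P)

/-- The partial ordering `P ⪰ Q`: `Σ(Q,σθ) ⊆ Σ(P,σθ)` and `Σ(P,σ) ⊆ Σ(Q,σ)`. -/
def Dominates {V : Type*} [AddCommGroup V] [Module ℝ V]
    (σ : V →ₗ[ℝ] V) (P Q : Set (V →ₗ[ℝ] ℝ)) : Prop :=
  rootsSigmaTheta σ Q ⊆ rootsSigmaTheta σ P ∧ rootsSigma σ P ⊆ rootsSigma σ Q

lemma posSystem_union_eq {V : Type*} [AddCommGroup V] [Module ℝ V]
    (σ : V →ₗ[ℝ] V) (hσ : ∀ X, σ (σ X) = X)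
    (S : Set (V →ₗ[ℝ] ℝ))
    (hSneg : ∀ α ∈ S, -α ∈ S) (hSσ : ∀ α ∈ S, α.comp σ ∈ S)
    {P : Set (V →ₗ[ℝ] ℝ)} (hP : IsPosSystem S P) :
    P = rootsSigma σ P ∪ rootsSigmaTheta σ P := by
  obtain ⟨X, hX, rfl⟩ := hP
  ext α
  constructor
  · rintro ⟨hαS, hαX⟩
    have hβS : α.comp σ ∈ S := hSσ α hαS
    have hcomp : (α.comp σ).comp σ = α := by
      ext v; simp [hσ]
    rcases lt_or_gt_of_ne (hX _ hβS) with h | h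
    · right
      refine ⟨⟨hαS, hαX⟩, -(α.comp σ), ⟨hSneg _ hβS, ?_⟩, ?_⟩
      · simpa using h
      · simp [LinearMap.neg_comp, hcomp]
    · left
      exact ⟨⟨hαS, hαX⟩, α.comp σ, ⟨hβS, h⟩, hcomp⟩
  · rintro (h | h) <;> exact h.1

/-- The relation `⪰` is a partial order on the set of positive systems for `Σ`:
reflexive, transitive, and antisymmetric. -/
theorem dominates_is_partialOrder
    {V : Type*} [AddCommGroup V] [Module ℝ V] [FiniteDimensional ℝ V]
    (σ : V →ₗ[ℝ] V) (hσ : ∀ X, σ (σ X) = X)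
    (S : Set (V →ₗ[ℝ] ℝ)) (hSfin : S.Finite) (hS0 : (0 : V →ₗ[ℝ] ℝ) ∉ S)
    (hSneg : ∀ α ∈ S, -α ∈ S) (hSσ : ∀ α ∈ S, α.comp σ ∈ S) :
    (∀ P, IsPosSystem S P → Dominates σ P P) ∧
      (∀ P Q R, IsPosSystem S P → IsPosSystem S Q → IsPosSystem S R →
        Dominates σ P Q → Dominates σ Q R → Dominates σ P R) ∧
      (∀ P Q, IsPosSystem S P → IsPosSystem S Q →
        Dominates σ P Q → Dominates σ Q P → P = Q) := by
  refine ⟨fun P _ => ⟨subset_rfl, subset_rfl⟩,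
    fun P Q R _ _ _ h1 h2 => ⟨h2.1.trans h1.1, h1.2.trans h2.2⟩,
    fun P Q hP hQ h1 h2 => ?_⟩
  have hσeq : rootsSigma σ P = rootsSigma σ Q := subset_antisymm h1.2 h2.2
  have hσθeq : rootsSigmaTheta σ P = rootsSigmaTheta σ Q := subset_antisymm h2.1 h1.1
  rw [posSystem_union_eq σ hσ S hSneg hSσ hP, posSystem_union_eq σ hσ S hSneg hSσ hQ,
    hσeq, hσθeq]
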